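/- Let d = 3 and suppose q = (q̄, q_n(q̄)) is a normalized central configuration, with q_i = (x_i, y_i, z_i). Then 0 = Σ_{i=1}^{n−1} ( −y_i · ∂F^red/∂x_i(q̄) + x_i · ∂F^red/∂y_i(q̄) ), an identity among the columns of the Jacobian matrix DF^red(q̄). -/

import Mathlib

open scoped BigOperators

noncomputable section

/-- Points in `ℝ^d`, with the Euclidean norm. -/
abbrev Pt (d : ℕ) := EuclideanSpace ℝ (Fin d)

/-- `F_i(q) = −q_i + Σ_{j ≠ i} m_j (q_j − q_i)/‖q_j − q_i‖³`. -/
noncomputable def nbodyF {d n : ℕ} (m : Fin n → ℝ) (q : Fin n → Pt d) : Fin n → Pt d :=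
  fun i => -q i + ∑ j ∈ Finset.univ.erase i, (m j / ‖q j - q i‖ ^ 3) • (q j - q i)

/-- A configuration is collision-free if all bodies occupy distinct positions. -/
def CollisionFree {d n : ℕ} (q : Fin n → Pt d) : Prop :=
  ∀ i j, i ≠ j → q i ≠ q j

/-- A normalized central configuration: collision-free, center of mass at the origin,
and `F(q) = 0`. -/
def IsNCC {d n : ℕ} (m : Fin n → ℝ) (q : Fin n → Pt d) : Prop :=
  CollisionFree q ∧ (∑ i, m i • q i) = 0 ∧ nbodyF m q = 0

/-- Embedding of the reduced index set `{1,…,n−1}` into `{1,…,n}`. -/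
def emb {n : ℕ} (i : Fin (n - 1)) : Fin n := Fin.castLE (Nat.sub_le n 1) i

/-- Extend a reduced configuration `q̄ = (q_1,…,q_{n−1})` by the position of the last body,
`q_n(q̄) = −(1/m_n) Σ_{i<n} m_i q_i`, computed from the center of mass condition. -/
noncomputable def extendConfig {d n : ℕ} (m : Fin n → ℝ) (qbar : Fin (n - 1) → Pt d) :
    Fin n → Pt d :=
  fun i => if h : (i : ℕ) < n - 1 then qbar ⟨i, h⟩
    else (-(1 / m i)) • ∑ j : Fin (n - 1), m (emb j) • qbar j

/-- The center-of-mass reduced map `F^red_i(q̄) = F_i(q_1,…,q_{n−1},q_n(q̄))`, `i = 1,…,n−1`. -/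
noncomputable def Fred {d n : ℕ} (m : Fin n → ℝ) (qbar : Fin (n - 1) → Pt d) :
    Fin (n - 1) → Pt d :=
  fun i => nbodyF m (extendConfig m qbar) (emb i)

/-- The Jacobian matrix of `F`, rows and columns indexed by (body, coordinate). -/
noncomputable def jacF {d n : ℕ} (m : Fin n → ℝ) (q : Fin n → Pt d) :
    Matrix (Fin n × Fin d) (Fin n × Fin d) ℝ :=
  fun p p' =>
    fderiv ℝ (fun q' : Fin n → Pt d => nbodyF m q' p.1 p.2) q
      (Pi.single p'.1 (EuclideanSpace.single p'.2 (1 : ℝ)))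

/-- The Jacobian matrix of `F^red`, rows and columns indexed by (body, coordinate). -/
noncomputable def jacFred {d n : ℕ} (m : Fin n → ℝ) (qbar : Fin (n - 1) → Pt d) :
    Matrix (Fin (n - 1) × Fin d) (Fin (n - 1) × Fin d) ℝ :=
  fun p p' =>
    fderiv ℝ (fun q' : Fin (n - 1) → Pt d => Fred m q' p.1 p.2) qbar
      (Pi.single p'.1 (EuclideanSpace.single p'.2 (1 : ℝ)))

/-! ### Auxiliary material: planar rotations and equivariance -/

/-- Rotation by angle `θ` in the `xy`-plane, as a linear map on `ℝ³`. -/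
noncomputable def rotL (θ : ℝ) : Pt 3 →ₗ[ℝ] Pt 3 where
  toFun x := WithLp.toLp 2 fun k =>
    if k = 0 then Real.cos θ * x 0 - Real.sin θ * x 1
    else if k = 1 then Real.sin θ * x 0 + Real.cos θ * x 1
    else x 2
  map_add' x y := by
    ext k
    simp only [PiLp.add_apply, PiLp.toLp_apply]
    split <;> try split
    all_goals ring
  map_smul' c x := by
    ext k
    simp only [PiLp.smul_apply, PiLp.toLp_apply, RingHom.id_apply, smul_eq_mul]
    split <;> try split
    all_goals ring

lemma rotL_apply (θ : ℝ) (x : Pt 3) (k : Fin 3) :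
    rotL θ x k = if k = 0 then Real.cos θ * x 0 - Real.sin θ * x 1
    else if k = 1 then Real.sin θ * x 0 + Real.cos θ * x 1
    else x 2 := rfl

lemma rotL_norm (θ : ℝ) (x : Pt 3) : ‖rotL θ x‖ = ‖x‖ := by
  have h := Real.sin_sq_add_cos_sq θ
  rw [EuclideanSpace.norm_eq, EuclideanSpace.norm_eq]
  congr 1
  rw [Fin.sum_univ_three, Fin.sum_univ_three]
  simp [rotL_apply, Real.norm_eq_abs, sq_abs]
  nlinarith [h]

lemma rotL_zero (x : Pt 3) : rotL 0 x = x := by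
  ext k
  fin_cases k <;> simp [rotL_apply]

lemma nbodyF_rot {n : ℕ} (m : Fin n → ℝ) (q : Fin n → Pt 3) (θ : ℝ) (i : Fin n) :
    nbodyF m (fun j => rotL θ (q j)) i = rotL θ (nbodyF m q i) := by
  unfold nbodyF
  rw [map_add, map_neg, map_sum]
  congr 1
  refine Finset.sum_congr rfl fun j hj => ?_
  rw [map_smul, ← map_sub, rotL_norm]

lemma extendConfig_rot {n : ℕ} (m : Fin n → ℝ) (qbar : Fin (n - 1) → Pt 3) (θ : ℝ) :
    extendConfig m (fun j => rotL θ (qbar j)) = fun i => rotL θ (extendConfig m qbar i) := by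
  funext i
  unfold extendConfig
  split
  · rfl
  · rw [map_smul, map_sum]
    simp_rw [map_smul]

lemma Fred_rot {n : ℕ} (m : Fin n → ℝ) (qbar : Fin (n - 1) → Pt 3) (θ : ℝ) (i : Fin (n - 1)) :
    Fred m (fun j => rotL θ (qbar j)) i = rotL θ (Fred m qbar i) := by
  unfold Fred
  rw [extendConfig_rot, nbodyF_rot]

lemma diff_ext {n : ℕ} (m : Fin n → ℝ) (qbar : Fin (n - 1) → Pt 3) :
    DifferentiableAt ℝ (fun q' : Fin (n - 1) → Pt 3 => extendConfig m q') qbar := by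
  rw [differentiableAt_pi]
  intro i
  unfold extendConfig
  split
  · exact differentiableAt_apply _ _
  · apply DifferentiableAt.fun_const_smul
    apply DifferentiableAt.fun_sum
    intro j _
    exact (differentiableAt_apply _ _).fun_const_smul _

lemma diff_nbodyF {n : ℕ} (m : Fin n → ℝ) (q0 : Fin n → Pt 3)
    (hq : CollisionFree q0) (i : Fin n) :
    DifferentiableAt ℝ (fun q : Fin n → Pt 3 => nbodyF m q i) q0 := by
  unfold nbodyF
  apply DifferentiableAt.add
  · exact (differentiableAt_apply i q0).neg
  · apply DifferentiableAt.fun_sum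
    intro j hj
    have hji : q0 j - q0 i ≠ 0 := sub_ne_zero.2 (hq j i (Finset.ne_of_mem_erase hj))
    have hsub : DifferentiableAt ℝ (fun q : Fin n → Pt 3 => q j - q i) q0 :=
      (differentiableAt_apply j q0).sub (differentiableAt_apply i q0)
    have hnorm : DifferentiableAt ℝ (fun q : Fin n → Pt 3 => ‖q j - q i‖) q0 :=
      hsub.norm ℝ hji
    have hden : DifferentiableAt ℝ (fun q : Fin n → Pt 3 => m j / ‖q j - q i‖ ^ 3) q0 := by
      have h3 : (‖q0 j - q0 i‖ : ℝ) ^ 3 ≠ 0 := by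
        have := norm_pos_iff.2 hji
        positivity
      simp only [div_eq_mul_inv]
      exact (differentiableAt_const (m j)).mul ((hnorm.pow 3).inv h3)
    exact hden.smul hsub

/-- `0 = Σ_i (−y_i ∂F^red/∂x_i + x_i ∂F^red/∂y_i)`
as an identity among the columns of `DF^red(q̄)` (here `x = 0`, `y = 1`). -/
theorem stmt4 {n : ℕ} (hn : 3 ≤ n) (m : Fin n → ℝ) (hm : ∀ i, 0 < m i)
    (qbar : Fin (n - 1) → Pt 3) (hcc : IsNCC m (extendConfig m qbar)) :
    ∀ p : Fin (n - 1) × Fin 3,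
      ∑ i : Fin (n - 1),
        (-(qbar i 1) * jacFred m qbar p (i, 0) + qbar i 0 * jacFred m qbar p (i, 1)) = 0 := by
  intro p
  -- the map whose derivative we study
  set f : (Fin (n - 1) → Pt 3) → ℝ := fun q' => Fred m q' p.1 p.2 with hf
  -- differentiability of f at qbar
  have h1 : DifferentiableAt ℝ (fun q' : Fin (n - 1) → Pt 3 => extendConfig m q') qbar :=
    diff_ext m qbar
  have h2 : DifferentiableAt ℝ (fun q : Fin n → Pt 3 => nbodyF m q (emb p.1))
      (extendConfig m qbar) := diff_nbodyF m _ hcc.1 _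
  have h3 : DifferentiableAt ℝ (fun q' : Fin (n - 1) → Pt 3 =>
      nbodyF m (extendConfig m q') (emb p.1)) qbar := h2.comp qbar h1
  have hdf : DifferentiableAt ℝ f qbar := by
    have := (EuclideanSpace.proj (𝕜 := ℝ) p.2).differentiableAt.comp qbar h3
    exact this
  set Df := fderiv ℝ f qbar with hDf
  have hFd : HasFDerivAt f Df qbar := hdf.hasFDerivAt
  -- the infinitesimal rotation direction
  set w : Fin (n - 1) → Pt 3 := fun j =>
    (-(qbar j 1)) • EuclideanSpace.single 0 (1 : ℝ) + (qbar j 0) • EuclideanSpace.single 1 (1 : ℝ)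
    with hw
  -- the rotated curve
  set c : ℝ → (Fin (n - 1) → Pt 3) := fun θ => fun j => rotL θ (qbar j) with hc
  have hc0 : c 0 = qbar := by funext j; exact rotL_zero _
  -- decomposition of the curve as cos θ • A + sin θ • w + E
  set A : Fin (n - 1) → Pt 3 := fun j =>
    (qbar j 0) • EuclideanSpace.single 0 (1 : ℝ) + (qbar j 1) • EuclideanSpace.single 1 (1 : ℝ)
    with hA
  set E : Fin (n - 1) → Pt 3 := fun j => (qbar j 2) • EuclideanSpace.single 2 (1 : ℝ) with hE
  have hdecomp : c = fun θ => Real.cos θ • A + Real.sin θ • w + E := by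
    funext θ j
    ext k
    simp only [hc, hA, hw, hE, Pi.add_apply, Pi.smul_apply, PiLp.add_apply, PiLp.smul_apply,
      smul_eq_mul, EuclideanSpace.single_apply, rotL_apply]
    fin_cases k <;> simp <;> ring
  -- derivative of the curve at 0
  have hcd : HasDerivAt c w 0 := by
    rw [hdecomp]
    have hcos : HasDerivAt Real.cos (-Real.sin 0) 0 := Real.hasDerivAt_cos 0
    have hsin : HasDerivAt Real.sin (Real.cos 0) 0 := Real.hasDerivAt_sin 0
    have := ((hcos.smul_const A).add (hsin.smul_const w)).add_const E
    simpa using this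
  -- the composed curve is identically zero
  have hFred0 : Fred m qbar p.1 = 0 := congrFun hcc.2.2 (emb p.1)
  have hgzero : (fun θ => f (c θ)) = fun _ => (0 : ℝ) := by
    funext θ
    simp only [hf, hc]
    rw [Fred_rot, hFred0, map_zero]
    rfl
  -- chain rule
  have hFd' : HasFDerivAt f Df (c 0) := by rw [hc0]; exact hFd
  have hcomp : HasDerivAt (fun θ => f (c θ)) (Df w) 0 := hFd'.comp_hasDerivAt 0 hcd
  rw [hgzero] at hcomp
  have hDfw : Df w = 0 := hcomp.unique (hasDerivAt_const 0 0)
  -- rewrite the sum as Df applied to w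
  have hsum : ∑ i : Fin (n - 1),
      (-(qbar i 1) * jacFred m qbar p (i, 0) + qbar i 0 * jacFred m qbar p (i, 1))
      = Df w := by
    have hterm : ∀ i : Fin (n - 1),
        -(qbar i 1) * jacFred m qbar p (i, 0) + qbar i 0 * jacFred m qbar p (i, 1)
        = Df (Pi.single i (w i)) := by
      intro i
      simp only [jacFred, ← hDf, hw]
      rw [Pi.single_add, map_add, Pi.single_smul, Pi.single_smul, map_smul, map_smul]
      simp [smul_eq_mul]
      rfl
    calc ∑ i : Fin (n - 1),
        (-(qbar i 1) * jacFred m qbar p (i, 0) + qbar i 0 * jacFred m qbar p (i, 1))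
        = ∑ i : Fin (n - 1), Df (Pi.single i (w i)) := Finset.sum_congr rfl fun i _ => hterm i
      _ = Df (∑ i : Fin (n - 1), Pi.single i (w i)) := (map_sum Df _ _).symm
      _ = Df w := by rw [Finset.univ_sum_single]
  rw [hsum, hDfw]

end
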